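/- arXiv:2103.02730 — 8 statements merged into one kernel-verified Lean document; each statement's English description precedes it below -/
import Mathlib

section
/- For every natural number n and every real number λ, the power series Q(r) := rⁿ · ∑_{k=0}^{∞} (−1)ᵏ · λ^{2k} · r^{2k} / (k! · (n+1)(n+2)···(n+k)) converges for every real r, and the function Q so defined is twice differentiable and satisfies the radial equation r²·Q''(r) + r·Q'(r) + (4λ²r² − n²)·Q(r) = 0 for all real r. -/
open Real

/-!
Write `Q(r) = ∑ₖ aₖ r^{n+2k}` with `aₖ = besselCoeff n λ k`. Since `|aₖ| ≤ (λ²)ᵏ / k!`, the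
series converges absolutely everywhere, and since `m R^{m-1} ≤ (2R + 2)^m` so do its formal
derivatives; hence it may be differentiated termwise twice. On a monomial
`r² (r^m)'' + r (r^m)' = m² r^m`, and `(n+2k)² - n² = 4k(n+k)`, so the left-hand side of the
radial equation is `∑ₖ (vₖ - vₖ₊₁)` with `vₖ = 4k(n+k) aₖ r^{n+2k}`: the recurrence
`(k+1)(n+k+1) aₖ₊₁ = -λ² aₖ` turns `vₖ₊₁` into `-4λ² r² aₖ r^{n+2k}`. The telescoping sum
equals `v₀ = 0`.
-/

/-- The power series solution `Q(r) = rⁿ · ∑ (−1)ᵏ λ^{2k} r^{2k} / (k! (n+1)⋯(n+k))`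
of the radial equation for the circular membrane. -/
noncomputable def besselRadialSolution (n : ℕ) (lam : ℝ) (r : ℝ) : ℝ :=
  r ^ n * ∑' k : ℕ,
    (-1 : ℝ) ^ k * lam ^ (2 * k) * r ^ (2 * k) /
      (k.factorial * ∏ j ∈ Finset.range k, ((n : ℝ) + (j : ℝ) + 1))

theorem Summable.tsum_sub_add_one {α : Type*} [AddCommGroup α] [TopologicalSpace α]
    [IsTopologicalAddGroup α] [T2Space α] {f : ℕ → α} (hf : Summable f) :
    ∑' k, (f k - f (k + 1)) = f 0 := by
  rw [hf.tsum_sub ((summable_nat_add_iff 1).2 hf), hf.tsum_eq_zero_add, add_sub_cancel_right]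

lemma natCast_mul_pow_sub_one_le (m : ℕ) {x : ℝ} (hx : 0 ≤ x) :
    (m : ℝ) * x ^ (m - 1) ≤ (2 * x + 2) ^ m :=
  calc (m : ℝ) * x ^ (m - 1) ≤ 2 ^ m * (x + 1) ^ m := by
        gcongr
        · exact_mod_cast Nat.lt_two_pow_self.le
        · calc x ^ (m - 1) ≤ (x + 1) ^ (m - 1) := by gcongr; linarith
            _ ≤ (x + 1) ^ m := pow_le_pow_right₀ (by linarith) (Nat.sub_le _ _)
    _ = (2 * x + 2) ^ m := by rw [← mul_pow]; ring

lemma sq_mul_deriv_deriv_pow_add_mul_deriv_pow (m : ℕ) (x : ℝ) :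
    x ^ 2 * (m * (m - 1 : ℕ) * x ^ (m - 1 - 1)) + x * (m * x ^ (m - 1)) = m ^ 2 * x ^ m := by
  match m with
  | 0 => simp
  | 1 => simp
  | m + 2 =>
    simp only [Nat.add_one_sub_one]
    push_cast
    ring

def IsEntireSeries (a : ℕ → ℝ) (e : ℕ → ℕ) : Prop :=
  ∀ x : ℝ, Summable fun k => |a k * x ^ e k|

namespace IsEntireSeries

variable {a : ℕ → ℝ} {e : ℕ → ℕ}

theorem summable (h : IsEntireSeries a e) (x : ℝ) : Summable fun k => a k * x ^ e k :=
  (h x).of_abs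

theorem derivSeries (h : IsEntireSeries a e) :
    IsEntireSeries (fun k => a k * e k) (fun k => e k - 1) := by
  intro x
  refine .of_nonneg_of_le (fun k => abs_nonneg _) (fun k => ?_) (h (2 * |x| + 2))
  have hR : (0 : ℝ) ≤ 2 * |x| + 2 := by positivity
  rw [abs_mul, abs_mul, abs_mul, abs_pow, abs_pow, Nat.abs_cast, mul_assoc, abs_of_nonneg hR]
  exact mul_le_mul_of_nonneg_left (natCast_mul_pow_sub_one_le _ (abs_nonneg x)) (abs_nonneg _)

theorem hasDerivAt (h : IsEntireSeries a e) (x : ℝ) :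
    HasDerivAt (fun y => ∑' k, a k * y ^ e k) (∑' k, a k * e k * x ^ (e k - 1)) x := by
  have hx : x ∈ Metric.ball (0 : ℝ) (|x| + 1) := by simp
  refine hasDerivAt_tsum_of_isPreconnected (g := fun k y => a k * y ^ e k)
    (g' := fun k y => a k * e k * y ^ (e k - 1)) (h.derivSeries (|x| + 1)) Metric.isOpen_ball
    (convex_ball _ _).isPreconnected (fun k y _ => ?_) (fun k y hy => ?_) hx (h.summable x) hx
  · simpa [mul_assoc] using (hasDerivAt_pow (e k) y).const_mul (a k)
  · rw [mem_ball_zero_iff, Real.norm_eq_abs] at hy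
    simp only [Real.norm_eq_abs, abs_mul, abs_pow, abs_of_pos (by positivity : 0 < |x| + 1)]
    gcongr

theorem differentiable (h : IsEntireSeries a e) :
    Differentiable ℝ fun y => ∑' k, a k * y ^ e k :=
  fun x => (h.hasDerivAt x).differentiableAt

theorem deriv_tsum (h : IsEntireSeries a e) :
    deriv (fun y => ∑' k, a k * y ^ e k) = fun x => ∑' k, a k * e k * x ^ (e k - 1) :=
  funext fun x => (h.hasDerivAt x).deriv

end IsEntireSeries

noncomputable def besselCoeff (n : ℕ) (lam : ℝ) (k : ℕ) : ℝ :=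
  (-1 : ℝ) ^ k * lam ^ (2 * k) /
    (k.factorial * ∏ j ∈ Finset.range k, ((n : ℝ) + (j : ℝ) + 1))

lemma abs_besselCoeff_le (n : ℕ) (lam : ℝ) (k : ℕ) :
    |besselCoeff n lam k| ≤ (lam ^ 2) ^ k / k.factorial := by
  have hprod : 1 ≤ ∏ j ∈ Finset.range k, ((n : ℝ) + (j : ℝ) + 1) :=
    Finset.one_le_prod fun j _ => by linarith [(by positivity : (0 : ℝ) ≤ n + j)]
  rw [besselCoeff, abs_div, abs_mul, abs_pow, abs_neg, abs_one, one_pow, one_mul, pow_mul,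
    abs_pow, abs_sq, abs_of_pos (by positivity)]
  gcongr
  exact le_mul_of_one_le_right (by positivity) hprod

lemma besselCoeff_succ (n : ℕ) (lam : ℝ) (k : ℕ) :
    ((k : ℝ) + 1) * (n + k + 1) * besselCoeff n lam (k + 1) = -lam ^ 2 * besselCoeff n lam k := by
  have hprod : 0 < ∏ j ∈ Finset.range k, ((n : ℝ) + (j : ℝ) + 1) :=
    Finset.prod_pos fun j _ => by positivity
  rw [besselCoeff, besselCoeff, Finset.prod_range_succ, Nat.factorial_succ]
  push_cast
  field_simp
  ring

lemma isEntireSeries_besselCoeff (n m : ℕ) (lam : ℝ) :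
    IsEntireSeries (besselCoeff n lam) (fun k => m + 2 * k) := by
  intro x
  refine .of_nonneg_of_le (fun k => abs_nonneg _) (fun k => ?_)
    ((summable_pow_div_factorial (lam ^ 2 * x ^ 2)).mul_left (|x| ^ m))
  calc |besselCoeff n lam k * x ^ (m + 2 * k)|
      = |x| ^ m * ((x ^ 2) ^ k * |besselCoeff n lam k|) := by
        rw [abs_mul, abs_pow, pow_add, pow_mul, sq_abs]; ring
    _ ≤ |x| ^ m * ((x ^ 2) ^ k * ((lam ^ 2) ^ k / k.factorial)) := by
        gcongr; exact abs_besselCoeff_le n lam k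
    _ = |x| ^ m * ((lam ^ 2 * x ^ 2) ^ k / k.factorial) := by ring

lemma besselRadialSolution_eq_tsum (n : ℕ) (lam : ℝ) :
    besselRadialSolution n lam = fun r => ∑' k, besselCoeff n lam k * r ^ (n + 2 * k) := by
  funext r
  rw [besselRadialSolution, ← tsum_mul_left]
  congr 1 with k
  rw [besselCoeff, pow_add]
  ring

lemma radialOperator_besselTerm_eq_sub (n : ℕ) (lam r : ℝ) (k : ℕ) :
    r ^ 2 * (besselCoeff n lam k * (n + 2 * k : ℕ) * (n + 2 * k - 1 : ℕ) *
          r ^ (n + 2 * k - 1 - 1)) +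
        r * (besselCoeff n lam k * (n + 2 * k : ℕ) * r ^ (n + 2 * k - 1)) +
        (4 * lam ^ 2 * r ^ 2 - (n : ℝ) ^ 2) * (besselCoeff n lam k * r ^ (n + 2 * k)) =
      4 * k * (n + k) * besselCoeff n lam k * r ^ (n + 2 * k) -
        4 * (k + 1 : ℕ) * (n + (k + 1 : ℕ)) * besselCoeff n lam (k + 1) *
          r ^ (n + 2 * (k + 1)) := by
  have euler := sq_mul_deriv_deriv_pow_add_mul_deriv_pow (n + 2 * k) r
  push_cast at euler ⊢
  linear_combination
    besselCoeff n lam k * euler + 4 * r ^ (n + 2 * k + 2) * besselCoeff_succ n lam k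

lemma besselSeries_radial_equation (n : ℕ) (lam r : ℝ) :
    r ^ 2 * ∑' k, besselCoeff n lam k * (n + 2 * k : ℕ) * (n + 2 * k - 1 : ℕ) *
          r ^ (n + 2 * k - 1 - 1) +
        r * ∑' k, besselCoeff n lam k * (n + 2 * k : ℕ) * r ^ (n + 2 * k - 1) +
        (4 * lam ^ 2 * r ^ 2 - (n : ℝ) ^ 2) * ∑' k, besselCoeff n lam k * r ^ (n + 2 * k) = 0 := by
  have hQ := isEntireSeries_besselCoeff n n lam
  set v : ℕ → ℝ := fun k => 4 * k * (n + k) * besselCoeff n lam k * r ^ (n + 2 * k)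
  have hv : Summable v := by
    refine (summable_nat_add_iff 1).1 <| ((hQ.summable r).mul_left (-4 * lam ^ 2 * r ^ 2)).congr
      fun k => ?_
    simp only [v, Nat.cast_add, Nat.cast_one]
    linear_combination (-4 * r ^ (n + 2 * k + 2)) * besselCoeff_succ n lam k
  have h₂ := (hQ.derivSeries.derivSeries.summable r).mul_left (r ^ 2)
  have h₁ := (hQ.derivSeries.summable r).mul_left r
  have h₀ := (hQ.summable r).mul_left (4 * lam ^ 2 * r ^ 2 - (n : ℝ) ^ 2)
  rw [← tsum_mul_left, ← tsum_mul_left, ← tsum_mul_left, ← h₂.tsum_add h₁,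
    ← (h₂.add h₁).tsum_add h₀,
    tsum_congr (radialOperator_besselTerm_eq_sub n lam r), hv.tsum_sub_add_one]
  simp [v]

/-- the series converges for every real `r`, and the resulting function is
twice differentiable and satisfies the radial equation
`r²·Q''(r) + r·Q'(r) + (4λ²r² − n²)·Q(r) = 0`. -/
theorem besselRadialSolution_solves_radial_equation (n : ℕ) (lam : ℝ) :
    (∀ r : ℝ, Summable (fun k : ℕ =>
      (-1 : ℝ) ^ k * lam ^ (2 * k) * r ^ (2 * k) /
        (k.factorial * ∏ j ∈ Finset.range k, ((n : ℝ) + (j : ℝ) + 1)))) ∧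
    Differentiable ℝ (besselRadialSolution n lam) ∧
    Differentiable ℝ (deriv (besselRadialSolution n lam)) ∧
    ∀ r : ℝ,
      r ^ 2 * deriv (deriv (besselRadialSolution n lam)) r +
        r * deriv (besselRadialSolution n lam) r +
        (4 * lam ^ 2 * r ^ 2 - (n : ℝ) ^ 2) * besselRadialSolution n lam r = 0 := by
  have hQ := isEntireSeries_besselCoeff n n lam
  rw [besselRadialSolution_eq_tsum]
  refine ⟨fun r => ?_, hQ.differentiable, ?_, fun r => ?_⟩
  · refine ((isEntireSeries_besselCoeff n 0 lam).summable r).congr fun k => ?_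
    rw [besselCoeff, zero_add, div_mul_eq_mul_div, mul_assoc]
  · rw [hQ.deriv_tsum]
    exact hQ.derivSeries.differentiable
  · rw [hQ.deriv_tsum, hQ.derivSeries.deriv_tsum]
    exact besselSeries_radial_equation n lam r
end

section
/- Let g > 0 and h ≠ 0 be real numbers, and let P : ℝ → ℝ be a twice differentiable function, not identically zero, satisfying P''(α) + (g² − 4h²·cos²α)·P(α) = 0 for all α and P(0) = 0. Then P(α) ≠ 0 for every α in the half-open interval (0, π/g]; i.e., the zeros of P are strictly larger than the corresponding zeros of sin(gα). -/
/-! Suppose `P` vanishes somewhere in `(0, π/g]` and let `β` be its first zero there; it exists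
because `P'(0) ≠ 0`, by uniqueness for the linear ODE. Replacing `P` by `-P`, `P > 0` on `(0, β)`.
The Wronskian `W = P' sin(g·) - P (g cos(g·))` of `P` and `sin(g·)` has derivative
`4h² cos²α · P(α) sin(gα) ≥ 0` on `[0, β]`, while `W 0 = 0` and `W β = P'(β) sin(gβ) ≤ 0`.
So `W` is constant on `[0, β]`, which forces `cos = 0` throughout `(0, β)`: absurd. -/

open Real Set Filter Topology

theorem HasDerivAt.nonpos_of_isMinOn_Icc {f : ℝ → ℝ} {f' a b : ℝ} (hab : a < b)
    (hf : HasDerivAt f f' b) (hmin : IsMinOn f (Icc a b) b) : f' ≤ 0 := by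
  have hcone : a - b ∈ posTangentConeAt (Icc a b) b :=
    sub_mem_posTangentConeAt_of_segment_subset (by rw [segment_symm, segment_eq_Icc hab.le])
  have := hmin.localize.hasFDerivWithinAt_nonneg hf.hasFDerivAt.hasFDerivWithinAt hcone
  simp only [ContinuousLinearMap.toSpanSingleton_apply, smul_eq_mul] at this
  nlinarith

theorem exists_first_zero_of_eventually_ne {f : ℝ → ℝ} {a α : ℝ} (hf : Continuous f)
    (hne : ∀ᶠ x in 𝓝[>] a, f x ≠ 0) (haα : a < α) (hα : f α = 0) :
    ∃ β ∈ Ioc a α, f β = 0 ∧ ∀ x ∈ Ioo a β, f x ≠ 0 := by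
  obtain ⟨u, hau, hu⟩ := mem_nhdsGT_iff_exists_Ioo_subset.mp hne
  set Z := f ⁻¹' {0} ∩ Icc (min u α) α
  have hZ : IsClosed Z := (isClosed_singleton.preimage hf).inter isClosed_Icc
  have hαZ : α ∈ Z := ⟨hα, min_le_right u α, le_rfl⟩
  have hZbdd : BddBelow Z := ⟨min u α, fun z hz => hz.2.1⟩
  obtain ⟨hβ, hβlo, hβhi⟩ := hZ.csInf_mem ⟨α, hαZ⟩ hZbdd
  refine ⟨sInf Z, ⟨(lt_min hau haα).trans_le hβlo, hβhi⟩, hβ, fun x hx hfx => ?_⟩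
  rcases lt_or_ge x u with hxu | hux
  · exact hu ⟨hx.1, hxu⟩ hfx
  · exact hx.2.not_ge (csInf_le hZbdd ⟨hfx, (min_le_left u α).trans hux, hx.2.le.trans hβhi⟩)

def SolvesSturm (q P P' : ℝ → ℝ) : Prop :=
  ∀ t, HasDerivAt P (P' t) t ∧ HasDerivAt P' (-(q t) * P t) t

namespace SolvesSturm

variable {q P P' : ℝ → ℝ}

theorem neg (hP : SolvesSturm q P P') : SolvesSturm q (-P) (-P') := fun t => by
  refine ⟨(hP t).1.neg, ?_⟩
  simpa only [Pi.neg_apply, mul_neg, neg_neg] using (hP t).2.neg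

theorem continuous (hP : SolvesSturm q P P') : Continuous P :=
  continuous_iff_continuousAt.2 fun t => (hP t).1.continuousAt

theorem eq_zero_of_eq_zero_of_deriv_eq_zero {B : ℝ} (hq : ∀ t, |q t| ≤ B)
    (hP : SolvesSturm q P P') {c : ℝ} (hc : P c = 0) (hc' : P' c = 0) : P = 0 := by
  set v : ℝ → ℝ × ℝ → ℝ × ℝ := fun t p => (p.2, -q t * p.1)
  have hv : ∀ t, LipschitzWith (max 1 B.toNNReal) (v t) := fun t =>
    LipschitzWith.prod_snd.prodMk <|
      ((lipschitzWith_smul (-q t)).comp LipschitzWith.prod_fst).weaken <| by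
        rw [mul_one, nnnorm_neg, ← NNReal.coe_le_coe, coe_nnnorm, Real.coe_toNNReal']
        exact (hq t).trans (le_max_left _ _)
  have hsol : (fun t => (P t, P' t)) = 0 :=
    ODE_solution_unique_univ (v := v) (s := fun _ => univ) (t₀ := c)
      (fun t => (hv t).lipschitzOnWith)
      (fun t => ⟨(hP t).1.prodMk (hP t).2, trivial⟩)
      (fun t => ⟨by simp [v, Prod.mk_zero_zero], trivial⟩)
      (by simp [hc, hc'])
  funext t
  exact congrArg Prod.fst (congrFun hsol t)

theorem hasDerivAt_wronskian_sin (hP : SolvesSturm q P P') (g x : ℝ) :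
    HasDerivAt (fun t => P' t * sin (g * t) - P t * (g * cos (g * t)))
      ((g ^ 2 - q x) * P x * sin (g * x)) x := by
  have hgx : HasDerivAt (fun t => g * t) g x := by simpa using (hasDerivAt_id x).const_mul g
  exact (((hP x).2.mul hgx.sin).sub ((hP x).1.mul (hgx.cos.const_mul g))).congr_deriv (by ring)

theorem eq_sq_of_pos_on_Ioo {g β : ℝ} (hP : SolvesSturm q P P') (hg : 0 < g)
    (hgβ : g * β ≤ π) (hq : ∀ x ∈ Ioo 0 β, q x ≤ g ^ 2) (h0 : P 0 = 0) (hβ : P β = 0)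
    (hpos : ∀ x ∈ Ioo 0 β, 0 < P x) : ∀ x ∈ Ioo 0 β, q x = g ^ 2 := by
  intro x hx
  have hβ0 : 0 < β := hx.1.trans hx.2
  set W := fun t => P' t * sin (g * t) - P t * (g * cos (g * t))
  have hsin : ∀ t ∈ Ioo 0 β, 0 < sin (g * t) := fun t ht =>
    sin_pos_of_pos_of_lt_pi (by nlinarith [ht.1]) (by nlinarith [ht.2])
  have hW : MonotoneOn W (Icc 0 β) := by
    refine monotoneOn_of_hasDerivWithinAt_nonneg (convex_Icc 0 β)
      (fun t _ => (hP.hasDerivAt_wronskian_sin g t).continuousAt.continuousWithinAt)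
      (fun t _ => (hP.hasDerivAt_wronskian_sin g t).hasDerivWithinAt) fun t ht => ?_
    rw [interior_Icc] at ht
    exact mul_nonneg (mul_nonneg (sub_nonneg.2 (hq t ht)) (hpos t ht).le) (hsin t ht).le
  have hW0 : W 0 = 0 := by simp [W, h0]
  have hWβ : W β ≤ 0 := by
    have hP'β : P' β ≤ 0 := (hP β).1.nonpos_of_isMinOn_Icc hβ0 <| isMinOn_iff.2 fun t ht => by
      rcases eq_endpoints_or_mem_Ioo_of_mem_Icc ht with rfl | rfl | ht
      · rw [h0, hβ]
      · rfl
      · exact hβ ▸ (hpos t ht).le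
    simpa [W, hβ] using mul_nonpos_of_nonpos_of_nonneg hP'β
      (sin_nonneg_of_nonneg_of_le_pi (by positivity) hgβ)
  have hWzero : W =ᶠ[𝓝 x] fun _ => 0 := by
    filter_upwards [Icc_mem_nhds hx.1 hx.2] with t ht
    have := hW ht (right_mem_Icc.2 hβ0.le) ht.2
    have := hW (left_mem_Icc.2 hβ0.le) ht ht.1
    linarith
  have hD : (g ^ 2 - q x) * P x * sin (g * x) = 0 :=
    (hP.hasDerivAt_wronskian_sin g x).unique ((hasDerivAt_const x 0).congr_of_eventuallyEq hWzero)
  have : g ^ 2 - q x = 0 := by simpa [(hpos x hx).ne', (hsin x hx).ne'] using hD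
  linarith

theorem eq_sq_of_ne_zero_on_Ioo {g β : ℝ} (hP : SolvesSturm q P P') (hg : 0 < g)
    (hgβ : g * β ≤ π) (hq : ∀ x ∈ Ioo 0 β, q x ≤ g ^ 2) (h0 : P 0 = 0) (hβ : P β = 0)
    (hne : ∀ x ∈ Ioo 0 β, P x ≠ 0) : ∀ x ∈ Ioo 0 β, q x = g ^ 2 := by
  rcases isPreconnected_Ioo.mapsTo_Ioi_or_Iio hP.continuous.continuousOn hne with hpos | hneg
  · exact hP.eq_sq_of_pos_on_Ioo hg hgβ hq h0 hβ hpos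
  · exact hP.neg.eq_sq_of_pos_on_Ioo hg hgβ hq (by simp [h0]) (by simp [hβ])
      fun x hx => neg_pos.2 (hneg hx)

end SolvesSturm

/-- the zeros of a solution of the angular equation of the elliptic
membrane vanishing at `0` are strictly larger than those of `sin (g α)`. -/
theorem zeros_of_angular_equation_larger_than_sin
    (g h : ℝ) (hg : 0 < g) (hh : h ≠ 0) (P : ℝ → ℝ)
    (hP : Differentiable ℝ P) (hP' : Differentiable ℝ (deriv P))
    (hPne : P ≠ fun _ => 0)
    (hode : ∀ α : ℝ,
      deriv (deriv P) α + (g ^ 2 - 4 * h ^ 2 * Real.cos α ^ 2) * P α = 0)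
    (h0 : P 0 = 0) :
    ∀ α ∈ Set.Ioc (0 : ℝ) (π / g), P α ≠ 0 := by
  intro α hα hPα
  set q := fun t => g ^ 2 - 4 * h ^ 2 * cos t ^ 2
  have hsol : SolvesSturm q P (deriv P) := fun t =>
    ⟨(hP t).hasDerivAt, (hP' t).hasDerivAt.congr_deriv (by linarith [hode t])⟩
  have hq_abs : ∀ t, |q t| ≤ g ^ 2 + 4 * h ^ 2 := fun t => by
    rw [abs_le]; constructor <;> nlinarith [cos_sq_le_one t, sq_nonneg (cos t), sq_nonneg h]
  have hd0 : deriv P 0 ≠ 0 := fun hd0 =>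
    hPne (hsol.eq_zero_of_eq_zero_of_deriv_eq_zero hq_abs h0 hd0)
  have hne : ∀ᶠ x in 𝓝[>] 0, P x ≠ 0 := by
    simpa only [h0] using ((hsol 0).1.eventually_ne hd0).filter_mono (nhdsGT_le_nhdsNE 0)
  obtain ⟨β, hβ, hPβ, hβne⟩ := exists_first_zero_of_eventually_ne hP.continuous hne hα.1 hPα
  have hgβ : g * β ≤ π := (le_div_iff₀' hg).1 (hβ.2.trans hα.2)
  obtain ⟨x, hx, hcos⟩ : ∃ x ∈ Ioo 0 β, 0 < cos x := by
    have hm : 0 < min β (π / 2) := lt_min hβ.1 (by positivity)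
    refine ⟨min β (π / 2) / 2, ⟨by positivity, by linarith [min_le_left β (π / 2)]⟩,
      cos_pos_of_mem_Ioo ⟨by linarith [pi_pos], by linarith [min_le_right β (π / 2)]⟩⟩
  have hqx := hsol.eq_sq_of_ne_zero_on_Ioo hg hgβ (fun t _ => sub_le_self _ (by positivity))
    h0 hPβ hβne x hx
  have : 0 < 4 * h ^ 2 * cos x ^ 2 := by positivity
  linarith
end

section
/- Periodicity criterion for Mathieu's equation: let a, q be real numbers and let P : ℝ → ℝ be a twice differentiable function satisfying P''(α) + (a − 2q·cos 2α)·P(α) = 0 for all α. If (P(0) = 0 and P(π/2) = 0) or (P'(0) = 0 and P'(π/2) = 0), then P(α + π) = P(α) for all α. If (P(0) = 0 and P'(π/2) = 0) or (P'(0) = 0 and P(π/2) = 0), then P(α + π) = −P(α) for all α. In all four cases P has period 2π: P(α + 2π) = P(α) for all α. -/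
/-!
The condition `P' r = 0` (resp. `P r = 0`) at `r = 0` or `r = π/2` makes `P` even (resp. odd)
about `r`: the coefficient `a - 2q cos 2α` is symmetric about both points, so the reflected
function `± P (2r - α)` solves the same equation with the same Cauchy data at `r` and coincides
with `P` by uniqueness. The two reflections compose to
the translation by `π`, with sign the product of the two parities.
-/

open Real Set

section SecondOrderLinear

variable {w : ℝ → ℝ} {K : ℝ}

theorem eq_of_deriv_deriv_eq_neg_mul (hw : ∀ t, |w t| ≤ K) {f g : ℝ → ℝ}
    (hf : Differentiable ℝ f) (hf' : Differentiable ℝ (deriv f))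
    (hfw : ∀ t, deriv (deriv f) t = -w t * f t)
    (hg : Differentiable ℝ g) (hg' : Differentiable ℝ (deriv g))
    (hgw : ∀ t, deriv (deriv g) t = -w t * g t)
    {t₀ : ℝ} (h₀ : f t₀ = g t₀) (h₁ : deriv f t₀ = deriv g t₀) : f = g := by
  have hv : ∀ t, LipschitzWith (max 1 K.toNNReal) fun p : ℝ × ℝ => (p.2, -w t * p.1) := fun t =>
    LipschitzWith.prod_snd.prodMk <|
      ((lipschitzWith_smul (-w t)).comp LipschitzWith.prod_fst).weaken <| by
        rw [mul_one, nnnorm_neg]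
        exact NNReal.le_toNNReal_of_coe_le (hw t)
  have hphase : ∀ u : ℝ → ℝ, Differentiable ℝ u → Differentiable ℝ (deriv u) →
      (∀ t, deriv (deriv u) t = -w t * u t) →
      ∀ t, HasDerivAt (fun t => (u t, deriv u t)) (deriv u t, -w t * u t) t :=
    fun u hu hu' huw t => huw t ▸ (hu t).hasDerivAt.prodMk (hu' t).hasDerivAt
  have hfg := ODE_solution_unique_univ (s := fun _ => univ) (fun t => (hv t).lipschitzOnWith)
    (fun t => ⟨hphase f hf hf' hfw t, trivial⟩) (fun t => ⟨hphase g hg hg' hgw t, trivial⟩)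
    (Prod.ext h₀ h₁)
  exact funext fun t => congrArg Prod.fst (congrFun hfg t)

theorem eq_mul_comp_reflect (hw : ∀ t, |w t| ≤ K) {P : ℝ → ℝ}
    (hP : Differentiable ℝ P) (hP' : Differentiable ℝ (deriv P))
    (hPw : ∀ t, deriv (deriv P) t = -w t * P t)
    {r s : ℝ} (hw_symm : ∀ t, w (2 * r - t) = w t)
    (h₀ : s * P r = P r) (h₁ : s * deriv P r = -deriv P r) (t : ℝ) :
    P t = s * P (2 * r - t) := by
  set Q : ℝ → ℝ := fun t => s * P (2 * r - t)
  have hreflect : ∀ t, HasDerivAt (fun t : ℝ => 2 * r - t) (-1) t := fun t => by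
    simpa using (hasDerivAt_id t).const_sub (2 * r)
  have hQ : ∀ t, HasDerivAt Q (-(s * deriv P (2 * r - t))) t := fun t => by
    simpa using ((hP _).hasDerivAt.comp t (hreflect t)).const_mul s
  have hderivQ : deriv Q = fun t => -(s * deriv P (2 * r - t)) := funext fun t => (hQ t).deriv
  have hQ' : ∀ t, HasDerivAt (deriv Q) (-w t * Q t) t := fun t => by
    rw [hderivQ]
    refine (((hP' _).hasDerivAt.comp t (hreflect t)).const_mul s).neg.congr_deriv ?_
    simp only [Q, hPw, hw_symm]
    ring
  have hrr : 2 * r - r = r := by ring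
  refine congrFun (eq_of_deriv_deriv_eq_neg_mul hw hP hP' hPw
    (fun t => (hQ t).differentiableAt) (fun t => (hQ' t).differentiableAt)
    (fun t => (hQ' t).deriv) (t₀ := r) ?_ ?_) t
  · simp only [Q, hrr, h₀]
  · simp only [hderivQ, hrr, h₁, neg_neg]

end SecondOrderLinear

theorem add_two_mul_sub_eq_of_reflect {f : ℝ → ℝ} {r₁ r₂ c₁ c₂ : ℝ}
    (h₁ : ∀ t, f t = c₁ * f (2 * r₁ - t)) (h₂ : ∀ t, f t = c₂ * f (2 * r₂ - t)) (t : ℝ) :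
    f (t + 2 * (r₂ - r₁)) = c₂ * c₁ * f t := by
  rw [h₂, show 2 * r₂ - (t + 2 * (r₂ - r₁)) = 2 * r₁ - t by ring, h₁ (2 * r₁ - t), sub_sub_cancel,
    mul_assoc]

theorem mathieu_add_pi_eq_mul {a q : ℝ} {P : ℝ → ℝ}
    (hP : Differentiable ℝ P) (hP' : Differentiable ℝ (deriv P))
    (hode : ∀ α, deriv (deriv P) α + (a - 2 * q * cos (2 * α)) * P α = 0)
    {s₀ s₁ : ℝ} (h₀ : s₀ * P 0 = P 0) (h₀' : s₀ * deriv P 0 = -deriv P 0)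
    (h₁ : s₁ * P (π / 2) = P (π / 2)) (h₁' : s₁ * deriv P (π / 2) = -deriv P (π / 2))
    (α : ℝ) : P (α + π) = s₁ * s₀ * P α := by
  set w : ℝ → ℝ := fun α => a - 2 * q * cos (2 * α)
  have hPw : ∀ α, deriv (deriv P) α = -w α * P α := fun α => by linarith [hode α]
  have hw : ∀ α, |w α| ≤ |a| + 2 * |q| := fun α => calc
    |w α| ≤ |a| + |2 * q| * |cos (2 * α)| := (abs_sub _ _).trans_eq (by rw [abs_mul])
    _ ≤ |a| + |2 * q| * 1 := by gcongr; exact abs_cos_le_one _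
    _ = |a| + 2 * |q| := by rw [mul_one, abs_mul, abs_two]
  have hw_symm₀ : ∀ α, w (2 * 0 - α) = w α := fun α => by
    simp only [w, mul_zero, zero_sub, mul_neg, cos_neg]
  have hw_symm₁ : ∀ α, w (2 * (π / 2) - α) = w α := fun α => by
    simp only [w, show 2 * (2 * (π / 2) - α) = -(2 * α) + 2 * π by ring, cos_add_two_pi, cos_neg]
  have h := add_two_mul_sub_eq_of_reflect (eq_mul_comp_reflect hw hP hP' hPw hw_symm₀ h₀ h₀')
    (eq_mul_comp_reflect hw hP hP' hPw hw_symm₁ h₁ h₁') α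
  rwa [show 2 * (π / 2 - 0) = π by ring] at h

/-- Periodicity criterion for Mathieu's equation. -/
theorem mathieu_periodicity_criterion
    (a q : ℝ) (P : ℝ → ℝ)
    (hP : Differentiable ℝ P) (hP' : Differentiable ℝ (deriv P))
    (hode : ∀ α : ℝ,
      deriv (deriv P) α + (a - 2 * q * Real.cos (2 * α)) * P α = 0) :
    ((P 0 = 0 ∧ P (π / 2) = 0) ∨ (deriv P 0 = 0 ∧ deriv P (π / 2) = 0) →
      ∀ α : ℝ, P (α + π) = P α) ∧
    ((P 0 = 0 ∧ deriv P (π / 2) = 0) ∨ (deriv P 0 = 0 ∧ P (π / 2) = 0) →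
      ∀ α : ℝ, P (α + π) = -P α) ∧
    ((P 0 = 0 ∨ deriv P 0 = 0) ∧ (P (π / 2) = 0 ∨ deriv P (π / 2) = 0) →
      ∀ α : ℝ, P (α + 2 * π) = P α) := by
  have hshift := fun s₀ s₁ => @mathieu_add_pi_eq_mul a q P hP hP' hode s₀ s₁
  have hπ : (P 0 = 0 ∧ P (π / 2) = 0) ∨ (deriv P 0 = 0 ∧ deriv P (π / 2) = 0) →
      ∀ α, P (α + π) = P α := by
    rintro (⟨h₀, h₁⟩ | ⟨h₀, h₁⟩) α
    · simpa using hshift (-1) (-1) (by simp [h₀]) (by ring) (by simp [h₁]) (by ring) α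
    · simpa using hshift 1 1 (by ring) (by simp [h₀]) (by ring) (by simp [h₁]) α
  have hπ_neg : (P 0 = 0 ∧ deriv P (π / 2) = 0) ∨ (deriv P 0 = 0 ∧ P (π / 2) = 0) →
      ∀ α, P (α + π) = -P α := by
    rintro (⟨h₀, h₁⟩ | ⟨h₀, h₁⟩) α
    · simpa using hshift (-1) 1 (by simp [h₀]) (by ring) (by ring) (by simp [h₁]) α
    · simpa using hshift 1 (-1) (by ring) (by simp [h₀]) (by simp [h₁]) (by ring) α
  refine ⟨hπ, hπ_neg, ?_⟩
  rintro ⟨h₀ | h₀, h₁ | h₁⟩ α <;> rw [show α + 2 * π = α + π + π by ring]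
  · simp only [hπ (.inl ⟨h₀, h₁⟩)]
  · simp only [hπ_neg (.inl ⟨h₀, h₁⟩), neg_neg]
  · simp only [hπ_neg (.inr ⟨h₀, h₁⟩), neg_neg]
  · simp only [hπ (.inr ⟨h₀, h₁⟩)]
end

section
/- First-order perturbation of the Mathieu function ce_g with exact remainder: let g be a real number with g ≠ 1 and g ≠ −1, and define p(α) := −cos((g+2)α)/(4(g+1)) + cos((g−2)α)/(4(g−1)). Then for every real h and every real α, the function P(α) := cos(gα) + h²·p(α) satisfies the exact identity P''(α) + (g² − 2h²·cos 2α)·P(α) = −2h⁴·cos(2α)·p(α). In particular p satisfies p''(α) + g²·p(α) = 2·cos(2α)·cos(gα), so P solves Mathieu's equation with parameters (g², h²) up to an error bounded by a constant multiple of h⁴, uniformly in α. -/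
open Real

/-- The first-order correction `p` in Mathieu's expansion of the even periodic
solution `P₂ = cos gα + h²p + ⋯`. -/
noncomputable def mathieuFirstCorrection (g : ℝ) (α : ℝ) : ℝ :=
  -Real.cos ((g + 2) * α) / (4 * (g + 1)) + Real.cos ((g - 2) * α) / (4 * (g - 1))

/-!
Write `L f = f'' + g² f`. Since `L (cos gα) = 0`, the Mathieu residual of `cos gα + c p` is
`c (L p − 2 cos 2α cos gα) − 2 c² cos 2α p`, so everything reduces to `L p = 2 cos 2α cos gα`.
Both `cos ((g ± 2) α)` are eigenfunctions of `d²/dα²`, and the coefficients of `p` are chosen so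
that `L p = cos ((g + 2) α) + cos ((g − 2) α)`, which is `2 cos 2α cos gα` by the
sum-to-product formula.
-/

lemma deriv_deriv_eq_iteratedDeriv_two {𝕜 F : Type*} [NontriviallyNormedField 𝕜]
    [NormedAddCommGroup F] [NormedSpace 𝕜 F] (f : 𝕜 → F) :
    deriv (deriv f) = iteratedDeriv 2 f := by
  rw [iteratedDeriv_succ, iteratedDeriv_one]

lemma iteratedDeriv_two_cos_mul (k x : ℝ) :
    iteratedDeriv 2 (fun y => cos (k * y)) x = -(k ^ 2 * cos (k * x)) := by
  rw [iteratedDeriv_comp_const_mul contDiff_cos]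
  simp

lemma cos_add_mul_add_cos_sub_mul (a b x : ℝ) :
    cos ((a + b) * x) + cos ((a - b) * x) = 2 * cos (b * x) * cos (a * x) := by
  rw [add_mul, sub_mul, cos_add, cos_sub]; ring

lemma contDiff_mathieuFirstCorrection (g : ℝ) {n : WithTop ℕ∞} :
    ContDiff ℝ n (mathieuFirstCorrection g) := by
  unfold mathieuFirstCorrection; fun_prop

lemma mathieuFirstCorrection_ode {g : ℝ} (hg1 : g ≠ 1) (hg2 : g ≠ -1) (α : ℝ) :
    iteratedDeriv 2 (mathieuFirstCorrection g) α + g ^ 2 * mathieuFirstCorrection g α =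
      2 * cos (2 * α) * cos (g * α) := by
  have hA : g + 1 ≠ 0 := fun h => hg2 (by linarith)
  have hB : g - 1 ≠ 0 := fun h => hg1 (by linarith)
  unfold mathieuFirstCorrection
  rw [iteratedDeriv_fun_add (by fun_prop) (by fun_prop)]
  simp only [neg_div, iteratedDeriv_fun_neg, iteratedDeriv_div_const, iteratedDeriv_two_cos_mul]
  rw [← cos_add_mul_add_cos_sub_mul]
  field_simp
  ring

lemma mathieu_residual_of_correction_ode {g c : ℝ} {p : ℝ → ℝ} (hp : ContDiff ℝ 2 p)
    (hode : ∀ α, iteratedDeriv 2 p α + g ^ 2 * p α = 2 * cos (2 * α) * cos (g * α)) (α : ℝ) :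
    iteratedDeriv 2 (fun β => cos (g * β) + c * p β) α
        + (g ^ 2 - 2 * c * cos (2 * α)) * (cos (g * α) + c * p α) =
      -2 * c ^ 2 * cos (2 * α) * p α := by
  rw [iteratedDeriv_fun_add (by fun_prop) (by fun_prop), iteratedDeriv_const_mul _ hp.contDiffAt,
    iteratedDeriv_two_cos_mul]
  linear_combination c * hode α

/-- first-order perturbation of the Mathieu function `ce_g`
with exact remainder. -/
theorem mathieu_first_order_perturbation
    (g : ℝ) (hg1 : g ≠ 1) (hg2 : g ≠ -1) :
    (∀ h α : ℝ,
      deriv (deriv (fun β : ℝ => Real.cos (g * β) + h ^ 2 * mathieuFirstCorrection g β)) α +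
          (g ^ 2 - 2 * h ^ 2 * Real.cos (2 * α)) *
            (Real.cos (g * α) + h ^ 2 * mathieuFirstCorrection g α) =
        -2 * h ^ 4 * Real.cos (2 * α) * mathieuFirstCorrection g α) ∧
    (∀ α : ℝ,
      deriv (deriv (mathieuFirstCorrection g)) α + g ^ 2 * mathieuFirstCorrection g α =
        2 * Real.cos (2 * α) * Real.cos (g * α)) := by
  have hode := mathieuFirstCorrection_ode hg1 hg2
  simp only [deriv_deriv_eq_iteratedDeriv_two]
  refine ⟨fun h α => ?_, hode⟩
  have residual :=
    mathieu_residual_of_correction_ode (c := h ^ 2) (contDiff_mathieuFirstCorrection g) hode α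
  rwa [← pow_mul] at residual
end

section
/- Odd power-series solution of the algebraic Mathieu equation: let m, h be real numbers and let (a_s)_{s≥1} be the sequence of real numbers defined by an arbitrary a₁, by a₂ = −(m − 1)·a₁/6, and by the recurrence a_{s+1} = (((2s−1)² − m)·a_s + 4h²·a_{s−1}) / (2s(2s+1)) for all s ≥ 2. Then the power series f(ν) := ∑_{s=1}^{∞} a_s·ν^{2s−1} converges for every ν with |ν| < 1, and the function f so defined satisfies (1 − ν²)·f''(ν) − ν·f'(ν) + (m − 4h²ν²)·f(ν) = 0 for all ν ∈ (−1, 1). -/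
/-!
The recurrence, with its denominator cleared, says exactly that the coefficient of `ν ^ (2s - 1)`
in the equation vanishes, so everything rests on differentiating the series termwise on `(-1, 1)`.
For that it suffices that the coefficients are bounded: for `M k = max |a k| |a (k + 1)|` the
recurrence gives `M (k + 1) ≤ (1 + K / (k + 1) ^ 2) * M k` with `K = |m| + 4 h ^ 2`, and the
product of these factors converges.
-/

open Real

/-- The odd power series `∑_{s≥1} a_s ν^{2s−1}` with coefficient sequence `a`. -/
noncomputable def oddMathieuSeries (a : ℕ → ℝ) (ν : ℝ) : ℝ :=
  ∑' s : ℕ, a (s + 1) * ν ^ (2 * s + 1)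

open Asymptotics Filter Finset Set

theorem le_mul_exp_sum_of_le_one_add_mul {M ε : ℕ → ℝ} (hM0 : ∀ n, 0 ≤ M n)
    (hM : ∀ n, M (n + 1) ≤ (1 + ε n) * M n) (n : ℕ) :
    M n ≤ M 0 * exp (∑ k ∈ range n, ε k) := by
  induction n with
  | zero => simp
  | succ n ih =>
    calc M (n + 1) ≤ (1 + ε n) * M n := hM n
      _ ≤ exp (ε n) * (M 0 * exp (∑ k ∈ range n, ε k)) := by
        gcongr
        · exact hM0 n
        · linarith [add_one_le_exp (ε n)]
      _ = M 0 * exp (∑ k ∈ range (n + 1), ε k) := by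
        rw [sum_range_succ, exp_add]; ring

theorem le_mul_exp_tsum_of_le_one_add_mul {M ε : ℕ → ℝ} (hM0 : ∀ n, 0 ≤ M n)
    (hM : ∀ n, M (n + 1) ≤ (1 + ε n) * M n) (hε0 : ∀ n, 0 ≤ ε n) (hε : Summable ε)
    (n : ℕ) : M n ≤ M 0 * exp (∑' k, ε k) :=
  (le_mul_exp_sum_of_le_one_add_mul hM0 hM n).trans <| by
    gcongr
    · exact hM0 0
    · exact hε.sum_le_tsum _ fun k _ => hε0 k

section PowerSeries

variable {c : ℕ → ℝ} {e : ℕ → ℕ} {p : ℕ} {x : ℝ}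

theorem summable_mul_pow_of_isBigO (hc : c =O[atTop] fun n => (n : ℝ) ^ p)
    (he : ∀ n, n ≤ e n) (hx : |x| < 1) : Summable fun n => c n * x ^ e n := by
  have hmaj : Summable fun n : ℕ => (n : ℝ) ^ p * |x| ^ n :=
    summable_pow_mul_geometric_of_norm_lt_one p (by rwa [norm_eq_abs, abs_abs])
  refine summable_of_isBigO_nat hmaj ((isBigO_of_le _ fun n => ?_).trans (hc.mul (isBigO_refl _ _)))
  simp only [norm_mul, norm_pow, norm_eq_abs, abs_abs]
  exact mul_le_mul_of_nonneg_left (pow_le_pow_of_le_one (abs_nonneg x) hx.le (he n)) (abs_nonneg _)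

theorem isBigO_mul_natCast (hc : c =O[atTop] fun n => (n : ℝ) ^ p)
    (he : (fun n => (e n : ℝ)) =O[atTop] fun n => (n : ℝ)) :
    (fun n => c n * e n) =O[atTop] fun n => (n : ℝ) ^ (p + 1) :=
  (hc.mul he).congr_right fun _ => (pow_succ _ _).symm

theorem hasDerivAt_tsum_mul_pow (hc : c =O[atTop] fun n => (n : ℝ) ^ p)
    (he : (fun n => (e n : ℝ)) =O[atTop] fun n => (n : ℝ)) (he₁ : ∀ n, n ≤ e n - 1)
    (hx : |x| < 1) :
    HasDerivAt (fun y => ∑' n, c n * y ^ e n) (∑' n, c n * e n * x ^ (e n - 1)) x := by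
  obtain ⟨r, hxr, hr1⟩ := exists_between hx
  have hr0 : 0 ≤ r := (abs_nonneg x).trans hxr.le
  have hu : Summable fun n => ‖c n * e n‖ * r ^ (e n - 1) :=
    summable_mul_pow_of_isBigO (isBigO_mul_natCast hc he).norm_left he₁
      (by rwa [abs_of_nonneg hr0])
  have hxt : x ∈ Ioo (-r) r := abs_lt.mp hxr
  have hsum : Summable fun n => c n * x ^ e n :=
    summable_mul_pow_of_isBigO hc (fun n => (he₁ n).trans (Nat.sub_le _ _)) hx
  have hderiv : ∀ n y, y ∈ Ioo (-r) r →
      HasDerivAt (fun y => c n * y ^ e n) (c n * e n * y ^ (e n - 1)) y := fun n y _ => by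
    simpa only [mul_assoc] using (hasDerivAt_pow (e n) y).const_mul (c n)
  have hbound : ∀ n y, y ∈ Ioo (-r) r →
      ‖c n * e n * y ^ (e n - 1)‖ ≤ ‖c n * e n‖ * r ^ (e n - 1) := by
    intro n y hy
    rw [norm_mul _ (y ^ _), norm_pow, norm_eq_abs y]
    gcongr
    exact (abs_lt.mpr hy).le
  exact hasDerivAt_tsum_of_isPreconnected hu isOpen_Ioo isPreconnected_Ioo hderiv hbound hxt hsum
    hxt

end PowerSeries

theorem isBigO_natCast_two_mul_add (j : ℕ) :
    (fun n : ℕ => ((2 * n + j : ℕ) : ℝ)) =O[atTop] fun n => (n : ℝ) := by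
  refine IsBigO.of_bound (2 + j) ((eventually_ge_atTop 1).mono fun n hn => ?_)
  have hn' : (1 : ℝ) ≤ n := by exact_mod_cast hn
  simp only [norm_natCast]
  push_cast
  nlinarith

/-- The recurrence of the statement with `s = k + 1` and the denominator cleared. -/
def IsMathieuOddRecurrence (m h : ℝ) (b : ℕ → ℝ) : Prop :=
  ∀ k : ℕ, (2 * k + 2) * (2 * k + 3) * b (k + 2) =
    ((2 * k + 1) ^ 2 - m) * b (k + 1) + 4 * h ^ 2 * b k

namespace IsMathieuOddRecurrence

variable {m h : ℝ} {b : ℕ → ℝ}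

theorem abs_le_one_add_mul_max (hb : IsMathieuOddRecurrence m h b) (k : ℕ) :
    |b (k + 2)| ≤ (1 + (|m| + 4 * h ^ 2) / ((k : ℝ) + 1) ^ 2) * max |b k| |b (k + 1)| := by
  set K := |m| + 4 * h ^ 2
  set N := max |b k| |b (k + 1)|
  have hk : (0 : ℝ) ≤ k := k.cast_nonneg
  have hd : (0 : ℝ) < (2 * k + 2) * (2 * k + 3) := by positivity
  have hN : 0 ≤ N := (abs_nonneg _).trans (le_max_left _ _)
  have hK : 0 ≤ K := by positivity
  have hgrowth : |b (k + 2)| * ((2 * k + 2) * (2 * k + 3)) ≤ ((2 * k + 1) ^ 2 + K) * N :=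
    calc |b (k + 2)| * ((2 * k + 2) * (2 * k + 3))
        = |((2 * k + 1) ^ 2 - m) * b (k + 1) + 4 * h ^ 2 * b k| := by
          rw [← hb k, abs_mul _ (b _), abs_of_pos hd, mul_comm]
      _ ≤ ((2 * k + 1) ^ 2 + |m|) * |b (k + 1)| + 4 * h ^ 2 * |b k| := by
          refine (abs_add_le _ _).trans (add_le_add ?_ ?_)
          · rw [abs_mul]
            gcongr
            exact (abs_sub _ _).trans_eq (by rw [abs_sq])
          · rw [abs_mul, abs_of_nonneg (by positivity)]
      _ ≤ ((2 * k + 1) ^ 2 + |m|) * N + 4 * h ^ 2 * N := by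
          gcongr
          exacts [le_max_right _ _, le_max_left _ _]
      _ = ((2 * k + 1) ^ 2 + K) * N := by ring
  have hcoef : (2 * (k : ℝ) + 1) ^ 2 + K ≤
      (1 + K / ((k : ℝ) + 1) ^ 2) * ((2 * k + 2) * (2 * k + 3)) := by
    have hKd : K ≤ K / ((k : ℝ) + 1) ^ 2 * ((2 * k + 2) * (2 * k + 3)) := by
      rw [div_mul_eq_mul_div, le_div_iff₀ (by positivity)]
      exact mul_le_mul_of_nonneg_left (by nlinarith) hK
    nlinarith
  rw [← mul_le_mul_iff_of_pos_right hd]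
  calc |b (k + 2)| * ((2 * k + 2) * (2 * k + 3)) ≤ ((2 * k + 1) ^ 2 + K) * N := hgrowth
    _ ≤ (1 + K / ((k : ℝ) + 1) ^ 2) * ((2 * k + 2) * (2 * k + 3)) * N := by gcongr
    _ = _ := by ring

theorem isBigO_one (hb : IsMathieuOddRecurrence m h b) :
    b =O[atTop] fun _ => (1 : ℝ) := by
  set K := |m| + 4 * h ^ 2
  set M : ℕ → ℝ := fun n => max |b n| |b (n + 1)|
  set ε : ℕ → ℝ := fun n => K / ((n : ℝ) + 1) ^ 2
  have hM0 : ∀ n, 0 ≤ M n := fun n => (abs_nonneg _).trans (le_max_left _ _)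
  have hε0 : ∀ n, 0 ≤ ε n := fun n => by positivity
  have hε : Summable ε := by
    have := ((summable_nat_add_iff 1).mpr (summable_one_div_nat_pow.mpr one_lt_two)).mul_left K
    simpa [ε, div_eq_mul_inv] using this
  have hM : ∀ n, M (n + 1) ≤ (1 + ε n) * M n := fun n =>
    max_le ((le_max_right _ _).trans (le_mul_of_one_le_left (hM0 n) (by linarith [hε0 n])))
      (hb.abs_le_one_add_mul_max n)
  refine IsBigO.of_bound (M 0 * exp (∑' k, ε k)) (Eventually.of_forall fun n => ?_)
  simpa using (le_max_left _ _).trans (le_mul_exp_tsum_of_le_one_add_mul hM0 hM hε0 hε n)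

theorem odd_series_eq_zero (hb : IsMathieuOddRecurrence m h b) (hb₀ : b 0 = 0) {x f f' f'' : ℝ}
    (hf : HasSum (fun k => b (k + 1) * x ^ (2 * k + 1)) f)
    (hf' : HasSum (fun k => b (k + 1) * ((2 * k + 1 : ℕ) : ℝ) * x ^ (2 * k)) f')
    (hf'' : HasSum (fun k => b (k + 1) * ((2 * k + 1 : ℕ) : ℝ) * ((2 * k : ℕ) : ℝ) *
      x ^ (2 * k - 1)) f'') :
    (1 - x ^ 2) * f'' - x * f' + (m - 4 * h ^ 2 * x ^ 2) * f = 0 := by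
  have hf''_shift :
      HasSum (fun k => b (k + 2) * (2 * k + 3) * (2 * k + 2) * x ^ (2 * k + 1)) f'' := by
    rw [← hasSum_nat_add_iff' 1] at hf''
    refine (by simpa using hf'' : HasSum _ f'').congr_fun fun k => ?_
    rw [show 2 * (k + 1) - 1 = 2 * k + 1 by omega]
    ring
  have hx2f'' : HasSum (fun k => b (k + 1) * (2 * k + 1) * (2 * k) * x ^ (2 * k + 1))
      (x ^ 2 * f'') := by
    refine (hf''.mul_left (x ^ 2)).congr_fun fun k => ?_
    rcases k with _ | k
    · simp
    · rw [show 2 * (k + 1) - 1 = 2 * k + 1 by omega]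
      push_cast
      ring
  have hxf' : HasSum (fun k => b (k + 1) * (2 * k + 1) * x ^ (2 * k + 1)) (x * f') :=
    (hf'.mul_left x).congr_fun fun k => by push_cast; ring
  have hx2f : HasSum (fun k => b k * x ^ (2 * k + 1)) (x ^ 2 * f) := by
    rw [← hasSum_nat_add_iff' 1]
    simp only [range_one, sum_singleton, hb₀, zero_mul, sub_zero]
    exact (hf.mul_left (x ^ 2)).congr_fun fun k => by ring
  have hsum := (hf''_shift.sub ((hx2f''.add hxf').sub (hf.mul_left m))).sub
    (hx2f.mul_left (4 * h ^ 2))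
  have hterms : ∀ k : ℕ, b (k + 2) * (2 * k + 3) * (2 * k + 2) * x ^ (2 * k + 1) -
      (b (k + 1) * (2 * k + 1) * (2 * k) * x ^ (2 * k + 1) +
        b (k + 1) * (2 * k + 1) * x ^ (2 * k + 1) - m * (b (k + 1) * x ^ (2 * k + 1))) -
      4 * h ^ 2 * (b k * x ^ (2 * k + 1)) = 0 := fun k => by
    linear_combination x ^ (2 * k + 1) * hb k
  simp only [hterms] at hsum
  linear_combination hsum.unique hasSum_zero

end IsMathieuOddRecurrence

-- With `a 0 := 0`, the initial condition on `a 2` is the recurrence at `s = 1`.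
theorem isMathieuOddRecurrence_update_zero {m h : ℝ} {a : ℕ → ℝ}
    (ha2 : a 2 = -(m - 1) * a 1 / 6)
    (hrec : ∀ s : ℕ, 2 ≤ s →
      a (s + 1) = (((2 * (s : ℝ) - 1) ^ 2 - m) * a s + 4 * h ^ 2 * a (s - 1)) /
        (2 * (s : ℝ) * (2 * (s : ℝ) + 1))) :
    IsMathieuOddRecurrence m h (Function.update a 0 0) := by
  rintro (_ | k)
  · simp only [CharP.cast_eq_zero, mul_zero, zero_add, one_pow, add_zero, Function.update_self,
      Function.update_of_ne one_ne_zero, Function.update_of_ne two_ne_zero]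
    linear_combination 6 * ha2
  · have hs := hrec (k + 2) (by omega)
    simp only [show k + 2 - 1 = k + 1 by omega] at hs
    rw [eq_div_iff (by positivity)] at hs
    rw [Function.update_of_ne (by omega), Function.update_of_ne (by omega),
      Function.update_of_ne (by omega)]
    push_cast at hs ⊢
    linear_combination hs

/-- odd power-series solution of the algebraic Mathieu equation. -/
theorem odd_series_solves_algebraic_mathieu
    (m h : ℝ) (a : ℕ → ℝ)
    (ha2 : a 2 = -(m - 1) * a 1 / 6)
    (hrec : ∀ s : ℕ, 2 ≤ s →
      a (s + 1) = (((2 * (s : ℝ) - 1) ^ 2 - m) * a s + 4 * h ^ 2 * a (s - 1)) /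
        (2 * (s : ℝ) * (2 * (s : ℝ) + 1))) :
    (∀ ν : ℝ, |ν| < 1 → Summable (fun s : ℕ => a (s + 1) * ν ^ (2 * s + 1))) ∧
    ∀ ν ∈ Set.Ioo (-1 : ℝ) 1,
      (1 - ν ^ 2) * deriv (deriv (oddMathieuSeries a)) ν -
        ν * deriv (oddMathieuSeries a) ν +
        (m - 4 * h ^ 2 * ν ^ 2) * oddMathieuSeries a ν = 0 := by
  have hb := isMathieuOddRecurrence_update_zero ha2 hrec
  have hupdate : ∀ k, Function.update a 0 0 (k + 1) = a (k + 1) :=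
    fun k => Function.update_of_ne k.succ_ne_zero _ _
  have ha₀ : (fun n => a (n + 1)) =O[atTop] fun n => (n : ℝ) ^ 0 :=
    (hb.isBigO_one.comp_tendsto (tendsto_add_atTop_nat 1)).congr hupdate
      fun _ => (pow_zero _).symm
  have ha₁ := isBigO_mul_natCast ha₀ (isBigO_natCast_two_mul_add 1)
  have ha₂ := isBigO_mul_natCast (e := fun n => 2 * n) ha₁ (isBigO_natCast_two_mul_add 0)
  have hsum : ∀ ν : ℝ, |ν| < 1 → Summable (fun s : ℕ => a (s + 1) * ν ^ (2 * s + 1)) :=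
    fun ν hν => summable_mul_pow_of_isBigO ha₀ (fun n => by omega) hν
  refine ⟨hsum, fun ν hν => ?_⟩
  have hν₁ : |ν| < 1 := abs_lt.mpr hν
  have hf' : ∀ y ∈ Ioo (-1 : ℝ) 1, HasDerivAt (oddMathieuSeries a)
      (∑' k, a (k + 1) * ((2 * k + 1 : ℕ) : ℝ) * y ^ (2 * k)) y := fun y hy =>
    hasDerivAt_tsum_mul_pow ha₀ (isBigO_natCast_two_mul_add 1) (fun n => by omega) (abs_lt.mpr hy)
  have hf'' := hasDerivAt_tsum_mul_pow (e := fun n => 2 * n) ha₁ (isBigO_natCast_two_mul_add 0)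
    (fun n => by omega) hν₁
  have hderiv : deriv (oddMathieuSeries a) =ᶠ[nhds ν] _ :=
    eventually_of_mem (isOpen_Ioo.mem_nhds hν) fun y hy => (hf' y hy).deriv
  rw [hderiv.deriv_eq, hf''.deriv, (hf' ν hν).deriv]
  refine hb.odd_series_eq_zero (Function.update_self _ _ _) ?_ ?_ ?_ <;> simp only [hupdate]
  · exact (hsum ν hν₁).hasSum
  · exact (summable_mul_pow_of_isBigO ha₁ (fun n => by omega) hν₁).hasSum
  · exact (summable_mul_pow_of_isBigO (e := fun n => 2 * n - 1) ha₂ (fun n => by omega)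
      hν₁).hasSum
end

section
/- Sign structure of the coefficients of the Mathieu series: let m', h be real numbers with h ≠ 0, and let (k_s)_{s≥0} be a sequence of real numbers satisfying k₁ = −m'·k₀/2 and k_{s+1} = ((4s² − m')·k_s − 4h²·k_{s−1}) / ((2s+1)(2s+2)) for all s ≥ 1. Then: (a) if k_s = 0 and k_{s+1} = 0 for some s ≥ 0, then k_j = 0 for every j; (b) if the sequence is not identically zero and k_s = 0 for some s ≥ 1, then k_{s−1}·k_{s+1} < 0, i.e., the two coefficients surrounding a vanishing coefficient have opposite signs. -/
/-!
Shifted by one, the recurrence reads `k (n + 2) = a n * k (n + 1) + b n * k n` with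
`b n = -4h² / ((2n + 3)(2n + 4)) < 0`. Since `b n ≠ 0`, two consecutive zeros force the previous
term to vanish as well, and then every term. If `k (n + 1) = 0` then `k n * k (n + 2) = b n * k n ^ 2`,
which is negative unless `k n = 0`, and that would be two consecutive zeros.
-/

section ThreeTermRecurrence

variable {R : Type*} {a b k : ℕ → R}

theorem eq_zero_of_recurrence_of_succ_eq_zero [Ring R] [NoZeroDivisors R]
    (hk : ∀ n, k (n + 2) = a n * k (n + 1) + b n * k n) (hb : ∀ n, b n ≠ 0) {n : ℕ}
    (h₁ : k (n + 1) = 0) (h₂ : k (n + 2) = 0) : k n = 0 := by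
  have : b n * k n = 0 := by simpa [h₁, h₂] using (hk n).symm
  exact (mul_eq_zero.mp this).resolve_left (hb n)

theorem forall_eq_zero_of_recurrence_of_zero_of_one [Ring R]
    (hk : ∀ n, k (n + 2) = a n * k (n + 1) + b n * k n) (h₀ : k 0 = 0) (h₁ : k 1 = 0) :
    ∀ j, k j = 0 := by
  have hpair : ∀ j, k j = 0 ∧ k (j + 1) = 0 := by
    intro j
    induction j with
    | zero => exact ⟨h₀, h₁⟩
    | succ n ih => exact ⟨ih.2, by rw [hk n, ih.1, ih.2, mul_zero, mul_zero, add_zero]⟩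
  exact fun j => (hpair j).1

theorem forall_eq_zero_of_recurrence_of_consecutive_zeros [Ring R] [NoZeroDivisors R]
    (hk : ∀ n, k (n + 2) = a n * k (n + 1) + b n * k n) (hb : ∀ n, b n ≠ 0) {s : ℕ}
    (h₀ : k s = 0) (h₁ : k (s + 1) = 0) : ∀ j, k j = 0 := by
  induction s with
  | zero => exact forall_eq_zero_of_recurrence_of_zero_of_one hk h₀ h₁
  | succ n ih => exact ih (eq_zero_of_recurrence_of_succ_eq_zero hk hb h₀ h₁) h₀

theorem mul_neg_of_recurrence_of_succ_eq_zero [CommRing R] [LinearOrder R] [IsStrictOrderedRing R]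
    (hk : ∀ n, k (n + 2) = a n * k (n + 1) + b n * k n) {n : ℕ} (hb : b n < 0)
    (h₁ : k (n + 1) = 0) (h₀ : k n ≠ 0) : k n * k (n + 2) < 0 := by
  rw [hk n, h₁, mul_zero, zero_add, mul_left_comm]
  exact mul_neg_of_neg_of_pos hb (mul_self_pos.mpr h₀)

end ThreeTermRecurrence

theorem mathieu_recurrence_shift {m' h : ℝ} {k : ℕ → ℝ}
    (hrec : ∀ s : ℕ, 1 ≤ s →
      k (s + 1) = ((4 * (s : ℝ) ^ 2 - m') * k s - 4 * h ^ 2 * k (s - 1)) /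
        ((2 * (s : ℝ) + 1) * (2 * (s : ℝ) + 2))) (n : ℕ) :
    k (n + 2) = (4 * ((n : ℝ) + 1) ^ 2 - m') / ((2 * n + 3) * (2 * n + 4)) * k (n + 1)
        + -(4 * h ^ 2) / ((2 * n + 3) * (2 * n + 4)) * k n := by
  rw [hrec (n + 1) n.succ_pos, Nat.add_sub_cancel]
  push_cast
  ring

theorem mathieu_coefficients_sign_structure_general
    (m' h : ℝ) (hh : h ≠ 0) (k : ℕ → ℝ)
    (hrec : ∀ s : ℕ, 1 ≤ s →
      k (s + 1) = ((4 * (s : ℝ) ^ 2 - m') * k s - 4 * h ^ 2 * k (s - 1)) /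
        ((2 * (s : ℝ) + 1) * (2 * (s : ℝ) + 2))) :
    ((∃ s : ℕ, k s = 0 ∧ k (s + 1) = 0) → ∀ j : ℕ, k j = 0) ∧
    ((¬ ∀ j : ℕ, k j = 0) →
      ∀ s : ℕ, 1 ≤ s → k s = 0 → k (s - 1) * k (s + 1) < 0) := by
  have hk := mathieu_recurrence_shift hrec
  have hb (n : ℕ) : -(4 * h ^ 2) / ((2 * (n : ℝ) + 3) * (2 * n + 4)) < 0 :=
    div_neg_of_neg_of_pos (neg_neg_of_pos (by positivity)) (by positivity)
  have hzeros : (∃ s : ℕ, k s = 0 ∧ k (s + 1) = 0) → ∀ j : ℕ, k j = 0 := fun ⟨_, h₀, h₁⟩ =>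
    forall_eq_zero_of_recurrence_of_consecutive_zeros hk (fun n => (hb n).ne) h₀ h₁
  refine ⟨hzeros, fun hne s hs hks => ?_⟩
  obtain ⟨n, rfl⟩ := Nat.exists_eq_add_of_le' hs
  exact mul_neg_of_recurrence_of_succ_eq_zero hk (hb n) hks fun h₀ => hne (hzeros ⟨n, h₀, hks⟩)

/-- sign structure of the coefficients of the Mathieu series. -/
theorem mathieu_coefficients_sign_structure
    (m' h : ℝ) (hh : h ≠ 0) (k : ℕ → ℝ)
    (hk1 : k 1 = -m' * k 0 / 2)
    (hrec : ∀ s : ℕ, 1 ≤ s →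
      k (s + 1) = ((4 * (s : ℝ) ^ 2 - m') * k s - 4 * h ^ 2 * k (s - 1)) /
        ((2 * (s : ℝ) + 1) * (2 * (s : ℝ) + 2))) :
    ((∃ s : ℕ, k s = 0 ∧ k (s + 1) = 0) → ∀ j : ℕ, k j = 0) ∧
    ((¬ ∀ j : ℕ, k j = 0) →
      ∀ s : ℕ, 1 ≤ s → k s = 0 → k (s - 1) * k (s + 1) < 0) :=
  mathieu_coefficients_sign_structure_general m' h hh k hrec
end

section
/- Series solution of the modified Mathieu equation in powers of the semi-minor axis: let R, h be real numbers, set m' = R − 2h², and let (k_s)_{s≥0} satisfy k₁ = −m'·k₀/2 and k_{s+1} = ((4s² − m')·k_s − 4h²·k_{s−1}) / ((2s+1)(2s+2)) for all s ≥ 1. Then the power series g(u) := ∑_{s=0}^{∞} (−1)^s·k_s·u^{2s} converges for every u with |u| < 1, and the function g so defined satisfies (1 + u²)·g''(u) + u·g'(u) + (4h²u² − R + 2h²)·g(u) = 0 for all u ∈ (−1, 1). -/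
/-!
With `x = -u² = ν'²` the series becomes the ordinary power series `G(x) = ∑ k_s xˢ`, and the
modified Mathieu equation for `g(u) = G(-u²)` becomes the algebraic Mathieu equation in `x`,
`4x(1 - x)G'' + 2(1 - 2x)G' + (m' + 4h²x)G = 0`, whose coefficient recursion is the given one.
The recursion bounds `|k_{s+1}|` by `(4s² + O(1)) / ((2s + 1)(2s + 2)) · max (|k_s|, |k_{s-1}|)`,
a factor tending to `1`, so `|k_s| = O(rˢ)` for every `r > 1`: `G` has radius of convergence at
least `1` and may be differentiated termwise.
-/

open Real

noncomputable def modifiedMathieuSeries (k : ℕ → ℝ) (u : ℝ) : ℝ :=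
  ∑' s : ℕ, (-1 : ℝ) ^ s * k s * u ^ (2 * s)

theorem exists_norm_le_mul_pow_of_norm_le_mul_max {E : Type*} [SeminormedAddCommGroup E]
    {a : ℕ → E} {r : ℝ} (hr : 1 ≤ r) {N : ℕ}
    (h : ∀ n, N ≤ n → ‖a (n + 2)‖ ≤ r * max ‖a (n + 1)‖ ‖a n‖) :
    ∃ C, ∀ n, ‖a n‖ ≤ C * r ^ n := by
  set C := ∑ i ∈ Finset.range (N + 2), ‖a i‖
  have hC : 0 ≤ C := Finset.sum_nonneg fun i _ => norm_nonneg _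
  have hinit : ∀ n < N + 2, ‖a n‖ ≤ C * r ^ n := fun n hn =>
    calc ‖a n‖ ≤ C :=
          Finset.single_le_sum (fun i _ => norm_nonneg (a i)) (Finset.mem_range.2 hn)
      _ ≤ C * r ^ n := le_mul_of_one_le_right hC (one_le_pow₀ hr)
  have hpair : ∀ n, ‖a n‖ ≤ C * r ^ n ∧ ‖a (n + 1)‖ ≤ C * r ^ (n + 1) := by
    intro n
    induction n with
    | zero => exact ⟨hinit 0 (by omega), hinit 1 (by omega)⟩
    | succ n ih =>
      refine ⟨ih.2, ?_⟩
      rcases lt_or_ge (n + 2) (N + 2) with hn | hn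
      · exact hinit (n + 2) hn
      have hmono : C * r ^ n ≤ C * r ^ (n + 1) :=
        mul_le_mul_of_nonneg_left (pow_le_pow_right₀ hr n.le_succ) hC
      calc ‖a (n + 2)‖ ≤ r * max ‖a (n + 1)‖ ‖a n‖ := h n (by omega)
        _ ≤ r * (C * r ^ (n + 1)) :=
          mul_le_mul_of_nonneg_left (max_le ih.2 (ih.1.trans hmono)) (by linarith)
        _ = C * r ^ (n + 1 + 1) := by ring
  exact ⟨C, fun n => (hpair n).1⟩

section PowerSeries

variable {𝕜 : Type*} [RCLike 𝕜]

/-- Equivalently, `∑ a n xⁿ` has radius of convergence at least `1`. -/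
def SubexponentialGrowth (a : ℕ → 𝕜) : Prop :=
  ∀ r : ℝ, 1 < r → ∃ C, ∀ n, ‖a n‖ ≤ C * r ^ n

def derivCoeff (a : ℕ → 𝕜) (n : ℕ) : 𝕜 := ((n : 𝕜) + 1) * a (n + 1)

noncomputable def powerSum (a : ℕ → 𝕜) (x : 𝕜) : 𝕜 := ∑' n, a n * x ^ n

variable {a : ℕ → 𝕜}

theorem SubexponentialGrowth.summable_norm_mul_pow (ha : SubexponentialGrowth a) {t : ℝ}
    (ht₀ : 0 ≤ t) (ht₁ : t < 1) : Summable fun n => ‖a n‖ * t ^ n := by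
  obtain ⟨C, hC⟩ := ha (2 / (1 + t)) (by rw [lt_div_iff₀ (by linarith)]; linarith)
  have hrt : 2 / (1 + t) * t < 1 := by rw [div_mul_eq_mul_div, div_lt_one (by linarith)]; linarith
  refine .of_nonneg_of_le (fun n => by positivity) (fun n => ?_)
    ((summable_geometric_of_lt_one (by positivity) hrt).mul_left C)
  calc ‖a n‖ * t ^ n ≤ C * (2 / (1 + t)) ^ n * t ^ n := by gcongr; exact hC n
    _ = C * (2 / (1 + t) * t) ^ n := by rw [mul_pow, mul_assoc]

theorem SubexponentialGrowth.summable_mul_pow (ha : SubexponentialGrowth a) {x : 𝕜}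
    (hx : ‖x‖ < 1) : Summable fun n => a n * x ^ n :=
  .of_norm_bounded (ha.summable_norm_mul_pow (norm_nonneg x) hx) fun n => by
    rw [norm_mul, norm_pow]

theorem SubexponentialGrowth.hasSum_powerSum (ha : SubexponentialGrowth a) {x : 𝕜}
    (hx : ‖x‖ < 1) : HasSum (fun n => a n * x ^ n) (powerSum a x) :=
  (ha.summable_mul_pow hx).hasSum

theorem subexponentialGrowth_derivCoeff (ha : SubexponentialGrowth a) :
    SubexponentialGrowth (derivCoeff a) := by
  intro r hr
  set ρ := √r
  have hρ : 1 < ρ := by rw [Real.lt_sqrt zero_le_one]; linarith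
  obtain ⟨C, hC⟩ := ha ρ hρ
  have hC₀ : 0 ≤ C := by simpa using (norm_nonneg _).trans (hC 0)
  have hlin : ∀ n : ℕ, (n : ℝ) + 1 ≤ (1 + (ρ - 1)⁻¹) * ρ ^ n := fun n => by
    have hbern := one_add_mul_le_pow (by linarith : (-2 : ℝ) ≤ ρ - 1) n
    have h1 := one_le_pow₀ hρ.le (n := n)
    rw [add_sub_cancel] at hbern
    have : (n : ℝ) ≤ (ρ - 1)⁻¹ * ρ ^ n := by
      rw [inv_mul_eq_div, le_div_iff₀ (by linarith)]; nlinarith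
    linarith
  refine ⟨(1 + (ρ - 1)⁻¹) * C * ρ, fun n => ?_⟩
  calc ‖derivCoeff a n‖ = ((n : ℝ) + 1) * ‖a (n + 1)‖ := by
        rw [derivCoeff, norm_mul, ← Nat.cast_succ, RCLike.norm_natCast, Nat.cast_succ]
    _ ≤ (1 + (ρ - 1)⁻¹) * ρ ^ n * (C * ρ ^ (n + 1)) := by gcongr; exacts [hlin n, hC _]
    _ = (1 + (ρ - 1)⁻¹) * C * ρ * (ρ ^ 2) ^ n := by ring
    _ = (1 + (ρ - 1)⁻¹) * C * ρ * r ^ n := by rw [Real.sq_sqrt (by linarith)]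

theorem SubexponentialGrowth.hasDerivAt_powerSum (ha : SubexponentialGrowth a) {x : 𝕜}
    (hx : ‖x‖ < 1) : HasDerivAt (powerSum a) (powerSum (derivCoeff a) x) x := by
  obtain ⟨t, hxt, ht₁⟩ := exists_between hx
  have ht₀ : 0 < t := (norm_nonneg x).trans_lt hxt
  have htail : HasDerivAt (fun y => ∑' n, a (n + 1) * y ^ (n + 1))
      (powerSum (derivCoeff a) x) x := by
    refine hasDerivAt_tsum_of_isPreconnected (g' := fun n y => derivCoeff a n * y ^ n)
      ((subexponentialGrowth_derivCoeff ha).summable_norm_mul_pow ht₀.le ht₁)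
      Metric.isOpen_ball
      (convex_ball 0 t).isPreconnected (fun n y _ => ?_) (fun n y hy => ?_)
      (Metric.mem_ball_self ht₀) (by simp) (mem_ball_zero_iff.2 hxt)
    · simpa [derivCoeff, mul_comm, mul_left_comm, mul_assoc] using
        (hasDerivAt_pow (n + 1) y).const_mul (a (n + 1))
    · rw [norm_mul, norm_pow]
      gcongr
      exact (mem_ball_zero_iff.1 hy).le
  refine (htail.const_add (a 0)).congr_of_eventuallyEq ?_
  filter_upwards [Metric.isOpen_ball.mem_nhds (mem_ball_zero_iff.2 hx)] with y hy
  simpa [powerSum] using (ha.summable_mul_pow (mem_ball_zero_iff.1 hy)).tsum_eq_zero_add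

theorem SubexponentialGrowth.hasDerivAt_powerSum_neg_sq (ha : SubexponentialGrowth a) {u : 𝕜}
    (hu : ‖u‖ < 1) :
    HasDerivAt (fun v => powerSum a (-v ^ 2)) (-2 * u * powerSum (derivCoeff a) (-u ^ 2)) u := by
  have hu2 : ‖-u ^ 2‖ < 1 := by rw [norm_neg, norm_pow]; nlinarith [norm_nonneg u]
  refine ((ha.hasDerivAt_powerSum hu2).comp u (hasDerivAt_pow 2 u).neg).congr_deriv ?_
  push_cast
  ring

theorem SubexponentialGrowth.deriv_deriv_powerSum_neg_sq (ha : SubexponentialGrowth a) {u : 𝕜}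
    (hu : ‖u‖ < 1) :
    deriv (deriv fun v => powerSum a (-v ^ 2)) u =
      -2 * powerSum (derivCoeff a) (-u ^ 2) +
        4 * u ^ 2 * powerSum (derivCoeff (derivCoeff a)) (-u ^ 2) := by
  have hderiv : deriv (fun v => powerSum a (-v ^ 2)) =ᶠ[nhds u]
      fun v => -2 * v * powerSum (derivCoeff a) (-v ^ 2) := by
    filter_upwards [Metric.isOpen_ball.mem_nhds (mem_ball_zero_iff.2 hu)] with v hv
    exact (ha.hasDerivAt_powerSum_neg_sq (mem_ball_zero_iff.1 hv)).deriv
  rw [hderiv.deriv_eq]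
  have hv := (subexponentialGrowth_derivCoeff ha).hasDerivAt_powerSum_neg_sq hu
  exact ((((hasDerivAt_id' u).const_mul (-2)).mul hv).congr_deriv (by ring)).deriv

end PowerSeries

theorem hasSum_mul_pow_of_hasSum_succ {R : Type*} [CommSemiring R] [TopologicalSpace R]
    [IsTopologicalSemiring R] {c : ℕ → R} {x S : R} (hc : c 0 = 0)
    (h : HasSum (fun n => c (n + 1) * x ^ n) S) : HasSum (fun n => c n * x ^ n) (x * S) := by
  have h' := HasSum.zero_add (f := fun n => c n * x ^ n) <|
    (h.mul_left x).congr_fun fun n => by ring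
  rwa [hc, zero_mul, zero_add] at h'

def MathieuRecurrence (m q : ℝ) (a : ℕ → ℝ) : Prop :=
  ∀ n : ℕ, (2 * n + 3) * (2 * n + 4) * a (n + 2) =
    (4 * (n + 1) ^ 2 - m) * a (n + 1) - 4 * q * a n

namespace MathieuRecurrence

variable {m q : ℝ} {a : ℕ → ℝ}

theorem subexponentialGrowth (hrec : MathieuRecurrence m q a) : SubexponentialGrowth a := by
  intro r hr
  set A := |m| + 4 * |q|
  obtain ⟨N, hN⟩ := exists_nat_ge (A / (r - 1))
  refine exists_norm_le_mul_pow_of_norm_le_mul_max hr.le (N := N) fun n hn => ?_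
  set M := max ‖a (n + 1)‖ ‖a n‖
  have hD : (0 : ℝ) < (2 * n + 3) * (2 * n + 4) := by positivity
  have hA : A ≤ (r - 1) * n := by
    have : (N : ℝ) ≤ n := by exact_mod_cast hn
    rw [div_le_iff₀ (by linarith)] at hN
    nlinarith
  have hM : 0 ≤ M := (norm_nonneg _).trans (le_max_left _ _)
  refine le_of_mul_le_mul_left ?_ hD
  simp only [Real.norm_eq_abs] at hM ⊢
  calc (2 * n + 3) * (2 * n + 4) * |a (n + 2)|
      = |(4 * (n + 1) ^ 2 - m) * a (n + 1) - 4 * q * a n| := by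
        rw [← hrec, abs_mul, abs_of_pos hD]
    _ ≤ (4 * (n + 1) ^ 2 + |m|) * |a (n + 1)| + 4 * |q| * |a n| := by
        refine (abs_sub _ _).trans ?_
        rw [abs_mul, abs_mul, abs_mul, abs_of_pos (by norm_num : (0 : ℝ) < 4)]
        gcongr
        exact (abs_sub _ _).trans (by rw [abs_of_nonneg (by positivity)])
    _ ≤ (4 * (n + 1) ^ 2 + |m|) * M + 4 * |q| * M := by
        gcongr
        exacts [le_max_left _ _, le_max_right _ _]
    _ ≤ (2 * n + 3) * (2 * n + 4) * (r * M) := by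
        nlinarith [mul_le_mul_of_nonneg_right hA hM, mul_nonneg (sub_nonneg.2 hr.le) hM]

theorem algebraic_mathieu_eq_of_hasSum (hrec : MathieuRecurrence m q a)
    (h₀ : 2 * a 1 + m * a 0 = 0) {x G G₁ G₂ : ℝ} (hG : HasSum (fun n => a n * x ^ n) G)
    (hG₁ : HasSum (fun n => derivCoeff a n * x ^ n) G₁)
    (hG₂ : HasSum (fun n => derivCoeff (derivCoeff a) n * x ^ n) G₂) :
    4 * x * (1 - x) * G₂ + 2 * (1 - 2 * x) * G₁ + (m + 4 * q * x) * G = 0 := by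
  have hxG₁ : HasSum (fun n : ℕ => (n : ℝ) * a n * x ^ n) (x * G₁) :=
    hasSum_mul_pow_of_hasSum_succ (c := fun n : ℕ => (n : ℝ) * a n) (by simp)
      (by simpa [derivCoeff] using hG₁)
  have hxG₂ : HasSum (fun n : ℕ => (n : ℝ) * derivCoeff a n * x ^ n) (x * G₂) :=
    hasSum_mul_pow_of_hasSum_succ (c := fun n : ℕ => (n : ℝ) * derivCoeff a n) (by simp)
      (by simpa [derivCoeff] using hG₂)
  have hxxG₂ : HasSum (fun n : ℕ => (n : ℝ) * (n - 1) * a n * x ^ n) (x * (x * G₂)) :=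
    hasSum_mul_pow_of_hasSum_succ (c := fun n : ℕ => (n : ℝ) * (n - 1) * a n) (by simp)
      (hxG₂.congr_fun fun n => by push_cast [derivCoeff]; ring)
  -- `e n` is the coefficient of `xⁿ` on the left; the recursion gives `e (n + 1) = -4q a n`.
  set e : ℕ → ℝ := fun n => (2 * n + 1) * (2 * n + 2) * a (n + 1) - (4 * n ^ 2 - m) * a n
    with he
  have hlhs : HasSum (fun n => e n * x ^ n)
      (4 * (x * G₂) + 2 * G₁ - 4 * (x * (x * G₂)) - 4 * (x * G₁) + m * G) := by
    refine ((((hxG₂.mul_left 4).add (hG₁.mul_left 2)).sub (hxxG₂.mul_left 4)).sub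
      (hxG₁.mul_left 4)).add (hG.mul_left m) |>.congr_fun fun n => ?_
    simp only [he, derivCoeff]
    ring
  have hrhs : HasSum (fun n => e n * x ^ n) (x * (-4 * q * G)) := by
    refine hasSum_mul_pow_of_hasSum_succ (by simp [he]; linarith)
      ((hG.mul_left (-4 * q)).congr_fun fun n => ?_)
    simp only [he]
    push_cast
    linear_combination x ^ n * hrec n
  linear_combination hlhs.unique hrhs

end MathieuRecurrence

theorem modifiedMathieuSeries_eq_powerSum (k : ℕ → ℝ) :
    modifiedMathieuSeries k = fun u => powerSum k (-u ^ 2) :=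
  funext fun u => tsum_congr fun s => by rw [neg_pow, pow_mul]; ring

/-- series solution of the modified Mathieu equation in powers of
the semi-minor axis. -/
theorem modified_mathieu_series_solution
    (R h : ℝ) (k : ℕ → ℝ)
    (hk1 : k 1 = -(R - 2 * h ^ 2) * k 0 / 2)
    (hrec : ∀ s : ℕ, 1 ≤ s →
      k (s + 1) = ((4 * (s : ℝ) ^ 2 - (R - 2 * h ^ 2)) * k s - 4 * h ^ 2 * k (s - 1)) /
        ((2 * (s : ℝ) + 1) * (2 * (s : ℝ) + 2))) :
    (∀ u : ℝ, |u| < 1 → Summable (fun s : ℕ => (-1 : ℝ) ^ s * k s * u ^ (2 * s))) ∧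
    ∀ u ∈ Set.Ioo (-1 : ℝ) 1,
      (1 + u ^ 2) * deriv (deriv (modifiedMathieuSeries k)) u +
        u * deriv (modifiedMathieuSeries k) u +
        (4 * h ^ 2 * u ^ 2 - R + 2 * h ^ 2) * modifiedMathieuSeries k u = 0 := by
  have hk : MathieuRecurrence (R - 2 * h ^ 2) (h ^ 2) k := fun n => by
    have := hrec (n + 1) (by omega)
    push_cast at this
    rw [this]
    field_simp
    ring
  have hk₀ := hk.subexponentialGrowth
  have hk₁ := subexponentialGrowth_derivCoeff hk₀
  have hk₂ := subexponentialGrowth_derivCoeff hk₁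
  have hsq : ∀ u : ℝ, |u| < 1 → ‖-u ^ 2‖ < 1 := fun u hu => by
    rw [norm_neg, norm_pow, Real.norm_eq_abs]
    nlinarith [abs_nonneg u]
  refine ⟨fun u hu => ?_, fun u hu => ?_⟩
  · exact (hk₀.summable_mul_pow (hsq u hu)).congr fun s => by rw [neg_pow, pow_mul]; ring
  have hu : ‖u‖ < 1 := abs_lt.2 hu
  rw [modifiedMathieuSeries_eq_powerSum, hk₀.deriv_deriv_powerSum_neg_sq hu,
    (hk₀.hasDerivAt_powerSum_neg_sq hu).deriv]
  have hx := hsq u hu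
  linear_combination -hk.algebraic_mathieu_eq_of_hasSum (by rw [hk1]; ring)
    (hk₀.hasSum_powerSum hx) (hk₁.hasSum_powerSum hx) (hk₂.hasSum_powerSum hx)
end

section
/- Green's identity for the radial factors on an elliptic membrane: let c, λ, λ', R, R', ϑ be real numbers with ϑ > 0, and let Q, Q̃ : ℝ → ℝ be twice continuously differentiable functions satisfying Q''(β) − (R − 2λ²c²·cosh 2β)·Q(β) = 0 and Q̃''(β) − (R' − 2λ'²c²·cosh 2β)·Q̃(β) = 0 for all β ∈ [0, ϑ], with Q(ϑ) = Q̃(ϑ) = 0, and such that either Q(0) = Q̃(0) = 0 or Q'(0) = Q̃'(0) = 0. Then (R − R')·∫₀^{ϑ} Q(β)·Q̃(β) dβ = 2(λ² − λ'²)·c²·∫₀^{ϑ} Q(β)·Q̃(β)·cosh 2β dβ. -/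
/-!
Write the two equations as `Q'' = (R - k ρ) Q` and `Q̃'' = (R' - k' ρ) Q̃` with `ρ β = cosh 2β`,
`k = 2λ²c²`, `k' = 2λ'²c²`. The Wronskian `W = Q Q̃' - Q' Q̃` has derivative
`Q Q̃'' - Q'' Q̃ = ((R' - R) + (k - k') ρ) Q Q̃`, so integrating over `[0, ϑ]` expresses the
difference of the two sides as `W 0 - W ϑ`. Both boundary terms vanish: at `ϑ` because `Q` and `Q̃`
vanish there, at `0` because either both functions or both derivatives vanish there.
-/

open Real intervalIntegral

noncomputable section

def wronskian (f g : ℝ → ℝ) (x : ℝ) : ℝ :=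
  f x * deriv g x - deriv f x * g x

variable {f g : ℝ → ℝ} {x : ℝ}

theorem wronskian_eq_zero_of_eq_zero (hf : f x = 0) (hg : g x = 0) : wronskian f g x = 0 := by
  simp [wronskian, hf, hg]

theorem wronskian_eq_zero_of_deriv_eq_zero (hf : deriv f x = 0) (hg : deriv g x = 0) :
    wronskian f g x = 0 := by
  simp [wronskian, hf, hg]

theorem hasDerivAt_wronskian (hf : ContDiff ℝ 2 f) (hg : ContDiff ℝ 2 g) (x : ℝ) :
    HasDerivAt (wronskian f g) (f x * deriv (deriv g) x - deriv (deriv f) x * g x) x := by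
  have hfg := ((hf.differentiable two_ne_zero x).hasDerivAt.mul
    (hg.differentiable_deriv_two x).hasDerivAt).sub
      ((hf.differentiable_deriv_two x).hasDerivAt.mul (hg.differentiable two_ne_zero x).hasDerivAt)
  exact hfg.congr_deriv (by ring)

theorem continuous_deriv_deriv (hf : ContDiff ℝ 2 f) : Continuous (deriv (deriv f)) :=
  (hf.deriv' (n := 1)).continuous_deriv_one

theorem integral_mul_deriv_deriv_sub (hf : ContDiff ℝ 2 f) (hg : ContDiff ℝ 2 g) (a b : ℝ) :
    ∫ x in a..b, (f x * deriv (deriv g) x - deriv (deriv f) x * g x) =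
      wronskian f g b - wronskian f g a := by
  refine integral_eq_sub_of_hasDerivAt (fun x _ => hasDerivAt_wronskian hf hg x) ?_
  exact (((hf.continuous.mul (continuous_deriv_deriv hg)).sub
    ((continuous_deriv_deriv hf).mul hg.continuous))).intervalIntegrable a b

theorem green_identity_of_deriv_deriv_eq {ρ : ℝ → ℝ} {E E' k k' a b : ℝ} (hρ : Continuous ρ)
    (hf : ContDiff ℝ 2 f) (hg : ContDiff ℝ 2 g)
    (hf_ode : ∀ x ∈ Set.uIcc a b, deriv (deriv f) x = (E - k * ρ x) * f x)
    (hg_ode : ∀ x ∈ Set.uIcc a b, deriv (deriv g) x = (E' - k' * ρ x) * g x) :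
    (E - E') * ∫ x in a..b, f x * g x =
      (k - k') * (∫ x in a..b, f x * g x * ρ x) + (wronskian f g a - wronskian f g b) := by
  have hfg : Continuous fun x => f x * g x := hf.continuous.mul hg.continuous
  have hfgρ : IntervalIntegrable (fun x => f x * g x * ρ x) MeasureTheory.volume a b :=
    (hfg.mul hρ).intervalIntegrable a b
  have hW := integral_mul_deriv_deriv_sub hf hg a b
  have hpointwise : Set.EqOn (fun x => f x * deriv (deriv g) x - deriv (deriv f) x * g x)
      (fun x => (k - k') * (f x * g x * ρ x) - (E - E') * (f x * g x)) (Set.uIcc a b) := by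
    intro x hx
    simp only [hf_ode x hx, hg_ode x hx]
    ring
  rw [integral_congr hpointwise,
    integral_sub (hfgρ.const_mul _) ((hfg.intervalIntegrable a b).const_mul _),
    integral_const_mul, integral_const_mul] at hW
  linarith

end

/-- Green's identity for the radial factors on an elliptic membrane. -/
theorem modified_mathieu_green_identity
    (c lam lam' R R' ϑ : ℝ) (hϑ : 0 < ϑ) (Q Qt : ℝ → ℝ)
    (hQ : ContDiff ℝ 2 Q) (hQt : ContDiff ℝ 2 Qt)
    (hQode : ∀ β ∈ Set.Icc (0 : ℝ) ϑ,
      deriv (deriv Q) β - (R - 2 * lam ^ 2 * c ^ 2 * Real.cosh (2 * β)) * Q β = 0)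
    (hQtode : ∀ β ∈ Set.Icc (0 : ℝ) ϑ,
      deriv (deriv Qt) β - (R' - 2 * lam' ^ 2 * c ^ 2 * Real.cosh (2 * β)) * Qt β = 0)
    (hQϑ : Q ϑ = 0) (hQtϑ : Qt ϑ = 0)
    (hbc : (Q 0 = 0 ∧ Qt 0 = 0) ∨ (deriv Q 0 = 0 ∧ deriv Qt 0 = 0)) :
    (R - R') * ∫ β in (0 : ℝ)..ϑ, Q β * Qt β =
      2 * (lam ^ 2 - lam' ^ 2) * c ^ 2 *
        ∫ β in (0 : ℝ)..ϑ, Q β * Qt β * Real.cosh (2 * β) := by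
  rw [← Set.uIcc_of_le hϑ.le] at hQode hQtode
  have hgreen := green_identity_of_deriv_deriv_eq (k := 2 * lam ^ 2 * c ^ 2)
    (k' := 2 * lam' ^ 2 * c ^ 2) (continuous_cosh.comp (continuous_const_mul 2)) hQ hQt
    (fun β hβ => eq_of_sub_eq_zero (hQode β hβ)) (fun β hβ => eq_of_sub_eq_zero (hQtode β hβ))
  have hW0 : wronskian Q Qt 0 = 0 := by
    rcases hbc with ⟨hQ0, hQt0⟩ | ⟨hQ0, hQt0⟩
    · exact wronskian_eq_zero_of_eq_zero hQ0 hQt0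
    · exact wronskian_eq_zero_of_deriv_eq_zero hQ0 hQt0
  rw [hW0, wronskian_eq_zero_of_eq_zero hQϑ hQtϑ, sub_zero, add_zero] at hgreen
  rw [hgreen]
  simp only [Function.comp_apply]
  ring
end
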